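/- arXiv:2010.07201 — 2 statements merged into one kernel-verified Lean document; each statement's English description precedes it below -/
import Mathlib

section
/- Let R be a reaction network on n species and let R̃ ⊆ R be a subset obtained by removing precisely one reaction of each reversible pair: for every (y, y′) ∈ R, if both (y, y′) ∈ R and (y′, y) ∈ R then exactly one of (y, y′), (y′, y) belongs to R̃, and otherwise (y, y′) ∈ R̃. If the family of reaction vectors (y′ − y), indexed by the reactions (y, y′) ∈ R̃, is linearly independent in ℝⁿ, then δ(R) = 0. -/
/-!
Send each complex `y` to the basis vector `e_y` of `ℝ^C`. The reaction vectors are the images of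
the incidence vectors `e_{y'} - e_y` under the linear map `e_y ↦ y`, and the span `E` of the
incidence vectors has dimension `|C| - ℓ`: its annihilator consists of the functions constant on
linkage classes, i.e. the kernel of the graph Laplacian. Hence `s ≤ dim E`. Every reaction or its
reverse lies in `R̃`, so the incidence vectors of `R̃` span `E` and `dim E ≤ |R̃|`, while linear
independence gives `|R̃| ≤ s`. Thus `s = |C| - ℓ`.
-/

open Finset

noncomputable section

namespace ReactionNetwork

/-- A (candidate) reaction network on `n` species: a finite set of ordered pairs
`(y, y')` of complexes `y, y' ∈ ℕⁿ`. -/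
abbrev Rxn (n : ℕ) := Finset ((Fin n → ℕ) × (Fin n → ℕ))

/-- The set of complexes of a reaction network. -/
def complexes {n : ℕ} (R : Rxn n) : Finset (Fin n → ℕ) :=
  R.image Prod.fst ∪ R.image Prod.snd

/-- The undirected graph on the complexes of `R`, with an edge `{y, y'}` for each
reaction `(y, y') ∈ R`. -/
def linkGraph {n : ℕ} (R : Rxn n) : SimpleGraph {y // y ∈ complexes R} where
  Adj a b := a ≠ b ∧ (((a : Fin n → ℕ), (b : Fin n → ℕ)) ∈ R ∨
    ((b : Fin n → ℕ), (a : Fin n → ℕ)) ∈ R)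
  symm := ⟨fun a b h => ⟨h.1.symm, h.2.symm⟩⟩
  loopless := ⟨fun a h => h.1 rfl⟩

/-- The number of linkage classes of `R`: the number of connected components of
the undirected graph on the complexes. -/
def numLC {n : ℕ} (R : Rxn n) : ℕ :=
  Nat.card (linkGraph R).ConnectedComponent

/-- The dimension of the stoichiometric subspace of `R`. -/
def stoichDim {n : ℕ} (R : Rxn n) : ℕ :=
  Module.finrank ℝ (Submodule.span ℝ
    {d : Fin n → ℝ | ∃ r ∈ R, d = fun i => ((r.2 i : ℝ) - (r.1 i : ℝ))})

/-- The deficiency of a reaction network: `|C(R)| - ℓ(R) - s(R)`. -/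
def deficiency {n : ℕ} (R : Rxn n) : ℤ :=
  (complexes R).card - numLC R - stoichDim R

end ReactionNetwork

namespace SimpleGraph

variable {V : Type*} [DecidableEq V] (G : SimpleGraph V)

def incidenceSpan : Submodule ℝ (V → ℝ) :=
  Submodule.span ℝ {x | ∃ a b, G.Adj a b ∧ x = Pi.single b 1 - Pi.single a 1}

variable [Fintype V] [DecidableRel G.Adj]

lemma dualAnnihilator_incidenceSpan :
    G.incidenceSpan.dualAnnihilator =
      (LinearMap.ker (G.lapMatrix ℝ).toLin').map
        ((Pi.basisFun ℝ V).toDualEquiv : (V → ℝ) →ₗ[ℝ] Module.Dual ℝ (V → ℝ)) := by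
  set e := (Pi.basisFun ℝ V).toDualEquiv
  have he : ∀ x v, e x (Pi.single v 1) = x v := fun x v => by
    simpa [e] using (Pi.basisFun ℝ V).toDual_apply_left x v
  ext φ
  obtain ⟨x, rfl⟩ := e.surjective φ
  rw [Submodule.mem_map_equiv, LinearEquiv.symm_apply_apply, LinearMap.mem_ker,
    Matrix.toLin'_apply, lapMatrix_mulVec_eq_zero_iff_forall_adj, ← SetLike.mem_coe,
    incidenceSpan, Submodule.coe_dualAnnihilator_span]
  simp only [Set.ofPred_subset, forall_exists_index, and_imp]
  constructor
  · intro h a b hab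
    have hba := h _ a b hab rfl
    simp only [SetLike.mem_coe, LinearMap.mem_ker, map_sub, he, sub_eq_zero] at hba
    exact hba.symm
  · rintro h _ a b hab rfl
    simp [he, h a b hab]

theorem finrank_incidenceSpan_add_card_connectedComponent :
    Module.finrank ℝ G.incidenceSpan + Nat.card G.ConnectedComponent = Fintype.card V := by
  have hdual := Subspace.finrank_add_finrank_dualAnnihilator_eq G.incidenceSpan
  rw [dualAnnihilator_incidenceSpan, LinearEquiv.finrank_map_eq,
    ← card_connectedComponent_eq_finrank_ker_toLin'_lapMatrix,
    Module.finrank_fintype_fun_eq_card] at hdual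
  rw [Nat.card_eq_fintype_card, hdual]

end SimpleGraph

namespace ReactionNetwork

open SimpleGraph

variable {n : ℕ} {R Rt : Rxn n} {r : (Fin n → ℕ) × (Fin n → ℕ)}

lemma fst_mem_complexes (hr : r ∈ R) : r.1 ∈ complexes R :=
  mem_union_left _ (mem_image_of_mem Prod.fst hr)

lemma snd_mem_complexes (hr : r ∈ R) : r.2 ∈ complexes R :=
  mem_union_right _ (mem_image_of_mem Prod.snd hr)

def reactionVector (r : (Fin n → ℕ) × (Fin n → ℕ)) : Fin n → ℝ :=
  fun i => (r.2 i : ℝ) - (r.1 i : ℝ)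

def complexMap (R : Rxn n) : ({y // y ∈ complexes R} → ℝ) →ₗ[ℝ] (Fin n → ℝ) :=
  Fintype.linearCombination ℝ fun y i => (y.1 i : ℝ)

def reactionIncidence (hr : r ∈ R) : {y // y ∈ complexes R} → ℝ :=
  Pi.single ⟨r.2, snd_mem_complexes hr⟩ 1 - Pi.single ⟨r.1, fst_mem_complexes hr⟩ 1

lemma complexMap_reactionIncidence (hr : r ∈ R) :
    complexMap R (reactionIncidence hr) = reactionVector r := by
  funext i
  simp [complexMap, reactionIncidence, reactionVector, Fintype.linearCombination_apply_single]

lemma reactionIncidence_mem_incidenceSpan (hr : r ∈ R) :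
    reactionIncidence hr ∈ (linkGraph R).incidenceSpan := by
  by_cases hloop : r.1 = r.2
  · have hzero : reactionIncidence hr = 0 := by simp [reactionIncidence, hloop]
    exact hzero ▸ Submodule.zero_mem _
  · exact Submodule.subset_span ⟨_, _, ⟨fun h => hloop (congrArg Subtype.val h), Or.inl hr⟩, rfl⟩

lemma stoichDim_le_finrank_incidenceSpan :
    stoichDim R ≤ Module.finrank ℝ (linkGraph R).incidenceSpan := by
  refine le_trans (Submodule.finrank_mono ?_) (Submodule.finrank_map_le (complexMap R) _)
  rw [Submodule.span_le]
  rintro _ ⟨r, hr, rfl⟩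
  exact ⟨_, reactionIncidence_mem_incidenceSpan hr, complexMap_reactionIncidence hr⟩

lemma card_le_stoichDim (hsub : Rt ⊆ R)
    (hli : LinearIndependent ℝ fun r : {x // x ∈ Rt} => reactionVector r.1) :
    Rt.card ≤ stoichDim R := by
  rw [← Fintype.card_coe Rt, ← finrank_span_eq_card hli]
  refine Submodule.finrank_mono (Submodule.span_mono ?_)
  rintro _ ⟨r, rfl⟩
  exact ⟨r.1, hsub r.2, rfl⟩

lemma incidenceSpan_le_span_reactionIncidence (hsub : Rt ⊆ R)
    (hcover : ∀ r ∈ R, r ∈ Rt ∨ r.swap ∈ Rt) :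
    (linkGraph R).incidenceSpan ≤
      Submodule.span ℝ (Set.range fun r : {x // x ∈ Rt} => reactionIncidence (hsub r.2)) := by
  set T := Submodule.span ℝ (Set.range fun r : {x // x ∈ Rt} => reactionIncidence (hsub r.2))
  have hmem : ∀ c d : {y // y ∈ complexes R}, (c.1, d.1) ∈ Rt →
      (Pi.single d 1 - Pi.single c 1 : _ → ℝ) ∈ T :=
    fun c d h => Submodule.subset_span ⟨⟨_, h⟩, rfl⟩
  have hrev : ∀ c d : {y // y ∈ complexes R}, (c.1, d.1) ∈ Rt →
      (Pi.single c 1 - Pi.single d 1 : _ → ℝ) ∈ T :=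
    fun c d h => by simpa using T.neg_mem (hmem c d h)
  rw [incidenceSpan, Submodule.span_le]
  rintro _ ⟨a, b, hab, rfl⟩
  rcases hab.2 with h | h <;> rcases hcover _ h with h' | h'
  exacts [hmem a b h', hrev b a h', hrev b a h', hmem a b h']

lemma finrank_incidenceSpan_le_card (hsub : Rt ⊆ R)
    (hcover : ∀ r ∈ R, r ∈ Rt ∨ r.swap ∈ Rt) :
    Module.finrank ℝ (linkGraph R).incidenceSpan ≤ Rt.card :=
  (Submodule.finrank_mono (incidenceSpan_le_span_reactionIncidence hsub hcover)).trans
    ((finrank_range_le_card _).trans (Fintype.card_coe Rt).le)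

theorem deficiency_eq_zero_of_linearIndependent_general (n : ℕ) (R Rt : Rxn n)
    (hsub : Rt ⊆ R)
    (hpair : ∀ y y' : Fin n → ℕ, (y, y') ∈ R →
      ((y', y) ∈ R → Xor' ((y, y') ∈ Rt) ((y', y) ∈ Rt)) ∧
      ((y', y) ∉ R → (y, y') ∈ Rt))
    (hli : LinearIndependent ℝ
      (fun r : {x // x ∈ Rt} =>
        (fun i => ((r : (Fin n → ℕ) × (Fin n → ℕ)).2 i : ℝ) -
          ((r : (Fin n → ℕ) × (Fin n → ℕ)).1 i : ℝ) : Fin n → ℝ))) :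
    deficiency R = 0 := by
  classical
  have hcover : ∀ r ∈ R, r ∈ Rt ∨ r.swap ∈ Rt := by
    rintro ⟨y, y'⟩ hr
    by_cases hrev : (y', y) ∈ R
    · exact Xor.or ((hpair y y' hr).1 hrev)
    · exact Or.inl ((hpair y y' hr).2 hrev)
  have hE := finrank_incidenceSpan_add_card_connectedComponent (linkGraph R)
  have hSE := stoichDim_le_finrank_incidenceSpan (R := R)
  have hEt := finrank_incidenceSpan_le_card hsub hcover
  have htS := card_le_stoichDim hsub hli
  rw [Fintype.card_coe] at hE
  rw [deficiency, numLC]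
  omega

/-- If, after removing precisely one reaction of each reversible
pair, the remaining reaction vectors are linearly independent, then the network
has deficiency zero. -/
theorem deficiency_eq_zero_of_linearIndependent (n : ℕ) (R Rt : Rxn n)
    (hR : ∀ r ∈ R, r.1 ≠ r.2) (hsub : Rt ⊆ R)
    (hpair : ∀ y y' : Fin n → ℕ, (y, y') ∈ R →
      ((y', y) ∈ R → Xor' ((y, y') ∈ Rt) ((y', y) ∈ Rt)) ∧
      ((y', y) ∉ R → (y, y') ∈ Rt))
    (hli : LinearIndependent ℝ
      (fun r : {x // x ∈ Rt} =>
        (fun i => ((r : (Fin n → ℕ) × (Fin n → ℕ)).2 i : ℝ) -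
          ((r : (Fin n → ℕ) × (Fin n → ℕ)).1 i : ℝ) : Fin n → ℝ))) :
    deficiency R = 0 :=
  deficiency_eq_zero_of_linearIndependent_general n R Rt hsub hpair hli

end ReactionNetwork
end
end

section
/- Let R be a reaction network on n species such that every complex of R is unary (every y ∈ C(R) is a standard basis vector e_a of ℝⁿ), every standard basis vector e_a for a ∈ {1, …, n} belongs to C(R), and R has exactly one linkage class (the graph with vertex set C(R) and edges from R is connected). Let i, j, p, q ∈ {1, …, n} be such that the unordered pairs (multisets) {i, j} and {p, q} are distinct (i = j and p = q are allowed), and let R̂ = R ∪ {(0, e_i+e_j), (e_i+e_j, 0), (0, e_p+e_q), (e_p+e_q, 0)}, i.e., R with the reversible reactions ∅ ⇌ S_i + S_j and ∅ ⇌ S_p + S_q adjoined. Then δ(R̂) = 1. -/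
/-!
The complexes of `R̂` are the `n` unit complexes together with `0`, `eᵢ + eⱼ` and `e_p + e_q`,
pairwise distinct (compare coordinate sums, and `{i, j} ≠ {p, q}`), so `|C(R̂)| = n + 3`.
No reaction joins a unit complex to one of the three new complexes, so the linkage classes of
`R̂` are those of `R` and of the added reactions: `ℓ(R̂) = 2`. As `R` is connected, every
`e_b - e_a` lies in `S(R̂)`; together with `eᵢ + eⱼ ∈ S(R̂)` this gives `S(R̂) = ℝⁿ`. Hence
`δ(R̂) = (n + 3) - 2 - n = 1`.
-/

open Finset

noncomputable section

namespace ReactionNetwork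

/-- The -th unit complex (one molecule of species ). -/
def unit {n : ℕ} (a : Fin n) : Fin n → ℕ := Pi.single a 1

end ReactionNetwork

/-- Halving is where the characteristic enters:
`2 eₐ = (eᵢ + eⱼ) - (eᵢ - eₐ) - (eⱼ - eₐ)`. -/
theorem Submodule.eq_top_of_single_sub_single_mem {K ι : Type*} [Field K] [NeZero (2 : K)]
    [Finite ι] [DecidableEq ι] {S : Submodule K (ι → K)}
    (hdiff : ∀ a b, Pi.single b 1 - Pi.single a 1 ∈ S) {i j : ι}
    (hij : Pi.single i 1 + Pi.single j 1 ∈ S) : S = ⊤ := by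
  have hsingle : ∀ a, (Pi.single a 1 : ι → K) ∈ S := by
    intro a
    rw [← S.smul_mem_iff (two_ne_zero : (2 : K) ≠ 0)]
    convert sub_mem (sub_mem hij (hdiff a i)) (hdiff a j) using 1
    module
  rw [eq_top_iff, ← (Pi.basisFun K ι).span_eq, Submodule.span_le]
  rintro _ ⟨a, rfl⟩
  simpa using hsingle a

namespace ReactionNetwork

variable {n : ℕ}

lemma mem_complexes_fst {R : Rxn n} {r : (Fin n → ℕ) × (Fin n → ℕ)} (h : r ∈ R) :
    r.1 ∈ complexes R :=
  mem_union_left _ (mem_image_of_mem Prod.fst h)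

lemma mem_complexes_snd {R : Rxn n} {r : (Fin n → ℕ) × (Fin n → ℕ)} (h : r ∈ R) :
    r.2 ∈ complexes R :=
  mem_union_right _ (mem_image_of_mem Prod.snd h)

lemma complexes_union (R S : Rxn n) : complexes (R ∪ S) = complexes R ∪ complexes S := by
  simp only [complexes, image_union]
  ext y
  simp only [mem_union]
  tauto

lemma complexes_mono {R S : Rxn n} (h : R ⊆ S) : complexes R ⊆ complexes S := by
  rw [← union_eq_right.mpr h, complexes_union]
  exact subset_union_left

def twoReversible (c v w : Fin n → ℕ) : Rxn n := {(c, v), (v, c), (c, w), (w, c)}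

lemma complexes_twoReversible (c v w : Fin n → ℕ) :
    complexes (twoReversible c v w) = {c, v, w} := by
  ext y
  simp only [twoReversible, complexes, image_insert, image_singleton, mem_union, mem_insert,
    mem_singleton]
  tauto

lemma complexes_eq_image_unit {R : Rxn n} (hunary : ∀ y ∈ complexes R, ∃ a, y = unit a)
    (hall : ∀ a, unit a ∈ complexes R) : complexes R = univ.image unit := by
  ext y
  simp only [mem_image, mem_univ, true_and]
  constructor
  · intro hy
    obtain ⟨a, rfl⟩ := hunary y hy
    exact ⟨a, rfl⟩
  · rintro ⟨a, rfl⟩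
    exact hall a

lemma unit_injective : Function.Injective (unit (n := n)) := fun a b h => by
  simpa [unit, Pi.single_apply] using congrFun h a

lemma sum_unit (a : Fin n) : ∑ b, unit a b = 1 := by
  simp [unit]

lemma unit_ne_zero (a : Fin n) : unit a ≠ 0 := by
  simp [unit]

lemma unit_add_unit_apply (i j a : Fin n) :
    (unit i + unit j) a = Multiset.count a {i, j} := by
  simp [unit, Pi.single_apply, Multiset.count_cons, Multiset.count_singleton, eq_comm, add_comm]

lemma unit_add_unit_ne_zero (i j : Fin n) : unit i + unit j ≠ 0 := by
  intro h
  simpa [unit] using congrFun h i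

lemma unit_ne_unit_add_unit (a i j : Fin n) : unit a ≠ unit i + unit j := by
  intro h
  simpa [sum_unit, sum_add_distrib] using congrArg (fun y => ∑ b, y b) h

lemma unit_add_unit_injective {i j p q : Fin n} (h : unit i + unit j = unit p + unit q) :
    ({i, j} : Multiset (Fin n)) = {p, q} :=
  Multiset.ext.mpr fun a => by simpa only [unit_add_unit_apply] using congrFun h a

lemma cast_unit_sub_unit (a b : Fin n) :
    (fun t => (unit b t : ℝ) - unit a t) = Pi.single b 1 - Pi.single a 1 := by
  ext t
  simp [unit, Pi.single_apply]

lemma cast_unit_add_unit (i j : Fin n) :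
    (fun t => ((unit i + unit j) t : ℝ) - (0 : Fin n → ℕ) t) = Pi.single i 1 + Pi.single j 1 := by
  ext t
  simp [unit, Pi.single_apply]

def linkGraphHomOfSubset {R S : Rxn n} (h : R ⊆ S) : linkGraph R →g linkGraph S where
  toFun y := ⟨y.1, complexes_mono h y.2⟩
  map_rel' hxy := ⟨fun he => hxy.1 (Subtype.ext (by simpa using he)),
    hxy.2.imp (fun hr => h hr) (fun hr => h hr)⟩

lemma connected_linkGraph_of_numLC_eq_one {R : Rxn n} (h : numLC R = 1) :
    (linkGraph R).Connected := by
  obtain ⟨hsub, ⟨c⟩⟩ := Nat.card_eq_one_iff_unique.mp h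
  obtain ⟨x, -⟩ := c.exists_rep
  exact (SimpleGraph.connected_iff_exists_forall_reachable _).mpr
    ⟨x, fun y => SimpleGraph.ConnectedComponent.exact (Subsingleton.elim _ _)⟩

lemma connected_linkGraph_twoReversible {c v w : Fin n → ℕ} (hv : c ≠ v) (hw : c ≠ w) :
    (linkGraph (twoReversible c v w)).Connected := by
  have hc : c ∈ complexes (twoReversible c v w) := by simp [complexes_twoReversible]
  refine (SimpleGraph.connected_iff_exists_forall_reachable _).mpr ⟨⟨c, hc⟩, ?_⟩
  rintro ⟨y, hy⟩
  simp only [complexes_twoReversible, mem_insert, mem_singleton] at hy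
  rcases hy with rfl | rfl | rfl
  · rfl
  · exact SimpleGraph.Adj.reachable
      ⟨fun h => hv (by simpa using h), Or.inl (by simp [twoReversible])⟩
  · exact SimpleGraph.Adj.reachable
      ⟨fun h => hw (by simpa using h), Or.inl (by simp [twoReversible])⟩

lemma reachable_of_subset_of_connected {R S : Rxn n} (hRS : R ⊆ S) (hR : (linkGraph R).Connected)
    {x y : {y // y ∈ complexes S}} (hx : x.1 ∈ complexes R) (hy : y.1 ∈ complexes R) :
    (linkGraph S).Reachable x y :=
  (hR ⟨x, hx⟩ ⟨y, hy⟩).map (linkGraphHomOfSubset hRS)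

/-- An edge of `E` at a complex of `R` would put that complex in `C(E)`. -/
lemma mem_complexes_of_reachable {R E : Rxn n} (hdisj : Disjoint (complexes R) (complexes E))
    {x y : {y // y ∈ complexes (R ∪ E)}} (h : (linkGraph (R ∪ E)).Reachable x y)
    (hx : x.1 ∈ complexes R) : y.1 ∈ complexes R := by
  obtain ⟨walk⟩ := h
  induction walk with
  | nil => exact hx
  | @cons u v _ huv _ ih =>
    refine ih ?_
    rcases huv.2 with hr | hr <;> rcases mem_union.mp hr with hr | hr
    · exact mem_complexes_snd hr
    · exact absurd (mem_complexes_fst hr) (disjoint_left.mp hdisj hx)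
    · exact mem_complexes_fst hr
    · exact absurd (mem_complexes_snd hr) (disjoint_left.mp hdisj hx)

lemma numLC_union_eq_two {R E : Rxn n} (hR : (linkGraph R).Connected)
    (hE : (linkGraph E).Connected) (hdisj : Disjoint (complexes R) (complexes E)) :
    numLC (R ∪ E) = 2 := by
  obtain ⟨⟨r, hr⟩⟩ := hR.nonempty
  obtain ⟨⟨e, he⟩⟩ := hE.nonempty
  have hmem : ∀ {y}, y ∈ complexes R ∨ y ∈ complexes E → y ∈ complexes (R ∪ E) := fun h => by
    rwa [complexes_union, mem_union]
  let xr : {y // y ∈ complexes (R ∪ E)} := ⟨r, hmem (Or.inl hr)⟩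
  let xe : {y // y ∈ complexes (R ∪ E)} := ⟨e, hmem (Or.inr he)⟩
  rw [numLC, Nat.card_eq_two_iff]
  refine ⟨(linkGraph (R ∪ E)).connectedComponentMk xr,
    (linkGraph (R ∪ E)).connectedComponentMk xe, fun h => ?_, ?_⟩
  · have := mem_complexes_of_reachable hdisj (SimpleGraph.ConnectedComponent.exact h) hr
    exact disjoint_left.mp hdisj this he
  · refine Set.eq_univ_of_forall (SimpleGraph.ConnectedComponent.ind fun y => ?_)
    have hy : y.1 ∈ complexes R ∪ complexes E := by rw [← complexes_union]; exact y.2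
    rcases mem_union.mp hy with hy | hy
    · exact Or.inl (SimpleGraph.ConnectedComponent.sound
        (reachable_of_subset_of_connected subset_union_left hR hy hr))
    · exact Or.inr (SimpleGraph.ConnectedComponent.sound
        (reachable_of_subset_of_connected subset_union_right hE hy he))

def stoichSpace (R : Rxn n) : Submodule ℝ (Fin n → ℝ) :=
  Submodule.span ℝ {d : Fin n → ℝ | ∃ r ∈ R, d = fun i => ((r.2 i : ℝ) - (r.1 i : ℝ))}

lemma stoichDim_eq_finrank (R : Rxn n) : stoichDim R = Module.finrank ℝ (stoichSpace R) := rfl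

lemma sub_mem_stoichSpace {R : Rxn n} {y y' : Fin n → ℕ} (h : (y, y') ∈ R) :
    (fun t => (y' t : ℝ) - y t) ∈ stoichSpace R :=
  Submodule.subset_span ⟨_, h, rfl⟩

lemma stoichSpace_mono {R S : Rxn n} (h : R ⊆ S) : stoichSpace R ≤ stoichSpace S :=
  Submodule.span_mono fun _ ⟨r, hr, hd⟩ => ⟨r, h hr, hd⟩

/-- Telescoping along a walk of the linkage graph. -/
lemma sub_mem_stoichSpace_of_reachable {R : Rxn n} {x y : {y // y ∈ complexes R}}
    (h : (linkGraph R).Reachable x y) :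
    (fun t => (y.1 t : ℝ) - x.1 t) ∈ stoichSpace R := by
  obtain ⟨walk⟩ := h
  induction walk with
  | nil => simp only [sub_self]; exact zero_mem _
  | @cons u v y huv _ ih =>
    have hedge : (fun t => (v.1 t : ℝ) - u.1 t) ∈ stoichSpace R := by
      rcases huv.2 with hr | hr
      · exact sub_mem_stoichSpace hr
      · convert neg_mem (sub_mem_stoichSpace hr) using 1
        ext t
        simp
    convert add_mem ih hedge using 1
    ext t
    simp only [Pi.add_apply]
    ring

lemma stoichSpace_eq_top_of_connected {R S : Rxn n} (hRS : R ⊆ S) (hR : (linkGraph R).Connected)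
    (hall : ∀ a, unit a ∈ complexes R) {i j : Fin n} (h : ((0 : Fin n → ℕ), unit i + unit j) ∈ S) :
    stoichSpace S = ⊤ := by
  refine Submodule.eq_top_of_single_sub_single_mem (fun a b => ?_) (i := i) (j := j) ?_
  · rw [← cast_unit_sub_unit]
    exact stoichSpace_mono hRS (sub_mem_stoichSpace_of_reachable (hR ⟨_, hall a⟩ ⟨_, hall b⟩))
  · rw [← cast_unit_add_unit]
    exact sub_mem_stoichSpace h

theorem deficiency_unary_plus_two_general (n : ℕ) (R : Rxn n)
    (hunary : ∀ y ∈ complexes R, ∃ a : Fin n, y = unit a)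
    (hall : ∀ a : Fin n, unit a ∈ complexes R)
    (hconn : numLC R = 1)
    (i j p q : Fin n) (hij : ({i, j} : Multiset (Fin n)) ≠ ({p, q} : Multiset (Fin n))) :
    deficiency (R ∪ {((0 : Fin n → ℕ), unit i + unit j), (unit i + unit j, (0 : Fin n → ℕ)),
      ((0 : Fin n → ℕ), unit p + unit q), (unit p + unit q, (0 : Fin n → ℕ))}) = 1 := by
  change deficiency (R ∪ twoReversible 0 (unit i + unit j) (unit p + unit q)) = 1
  set E := twoReversible 0 (unit i + unit j) (unit p + unit q)
  have hR : (linkGraph R).Connected := connected_linkGraph_of_numLC_eq_one hconn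
  have hCR : complexes R = univ.image unit := complexes_eq_image_unit hunary hall
  have hCE : complexes E = {0, unit i + unit j, unit p + unit q} := complexes_twoReversible ..
  have hdisj : Disjoint (complexes R) (complexes E) := by
    simp [hCR, hCE, disjoint_left, unit_ne_zero, unit_ne_unit_add_unit]
  have hcard : (complexes (R ∪ E)).card = n + 3 := by
    rw [complexes_union, card_union_of_disjoint hdisj, hCR, hCE,
      card_image_of_injective _ unit_injective, card_univ, Fintype.card_fin]
    have hvw : unit i + unit j ≠ unit p + unit q := fun h => hij (unit_add_unit_injective h)
    simp [(unit_add_unit_ne_zero _ _).symm, hvw]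
  have hlc : numLC (R ∪ E) = 2 := numLC_union_eq_two hR
    (connected_linkGraph_twoReversible (unit_add_unit_ne_zero i j).symm
      (unit_add_unit_ne_zero p q).symm) hdisj
  have hs : stoichDim (R ∪ E) = n := by
    have h0v : ((0 : Fin n → ℕ), unit i + unit j) ∈ R ∪ E :=
      mem_union_right _ (by simp [E, twoReversible])
    rw [stoichDim_eq_finrank, stoichSpace_eq_top_of_connected subset_union_left hR hall h0v,
      finrank_top, Module.finrank_fin_fun]
  rw [deficiency, hcard, hlc, hs]
  push_cast
  ring

/-- Adjoining two distinct reversible reactions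
`∅ ⇌ Sᵢ + Sⱼ` and `∅ ⇌ Sₚ + S_q` to a connected network all of whose complexes
are unary (and containing every unary complex) yields deficiency one. -/
theorem deficiency_unary_plus_two (n : ℕ) (R : Rxn n)
    (hR : ∀ r ∈ R, r.1 ≠ r.2)
    (hunary : ∀ y ∈ complexes R, ∃ a : Fin n, y = unit a)
    (hall : ∀ a : Fin n, unit a ∈ complexes R)
    (hconn : numLC R = 1)
    (i j p q : Fin n) (hij : ({i, j} : Multiset (Fin n)) ≠ ({p, q} : Multiset (Fin n))) :
    deficiency (R ∪ {((0 : Fin n → ℕ), unit i + unit j), (unit i + unit j, (0 : Fin n → ℕ)),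
      ((0 : Fin n → ℕ), unit p + unit q), (unit p + unit q, (0 : Fin n → ℕ))}) = 1 :=
  deficiency_unary_plus_two_general n R hunary hall hconn i j p q hij

end ReactionNetwork
end
end
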